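/- Let b ∈ {0,1}^d, s | d, a = d/s, and p ∈ [0,1/2). For the block-sampled 2RR mechanism (sample one uniform coordinate per block of size a, apply unbiased 2RR, scale by a), the estimator y satisfies E[‖y - b‖₂²] = s·a²·p(1-p)/(1-2p)² + (a-1)·‖b‖₂² ≤ s·a²·p(1-p)/(1-2p)² + (a-1)·d. -/

import Mathlib

/-- MSE of the block-sampled 2RR mechanism: `b ∈ {0,1}^d` with `d = s·a` is split
into `s` blocks of size `a` (`b j i` is coordinate `i` of block `j`). In block `j`
a uniformly random coordinate `i` is sampled, replaced by `a·R(b j i)` where `R`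
is the unbiased 2RR mechanism with parameter `p`, and the other coordinates of the
block are set to `0`. Then
`E[‖y - b‖₂²] = s·a²·p(1-p)/(1-2p)² + (a-1)·‖b‖₂² ≤ s·a²·p(1-p)/(1-2p)² + (a-1)·d`. -/
theorem block_sampled_2RR_mse (a s : ℕ) (ha : 0 < a) (d : ℕ) (hd : d = s * a)
    (p : ℝ) (hp0 : 0 ≤ p) (hp : p < 1/2)
    (b : Fin s → Fin a → ℝ) (hb : ∀ j i, b j i = 0 ∨ b j i = 1) :
    (∑ j : Fin s, (1 / (a:ℝ)) * ∑ i : Fin a,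
        ((1 - p) * ((a:ℝ) * ((b j i - p) / (1 - 2*p)) - b j i)^2
          + p * ((a:ℝ) * ((1 - b j i - p) / (1 - 2*p)) - b j i)^2
          + ∑ i' ∈ Finset.univ.erase i, (b j i')^2))
      = (s:ℝ) * (a:ℝ)^2 * (p * (1 - p) / (1 - 2*p)^2)
          + ((a:ℝ) - 1) * ∑ j : Fin s, ∑ i : Fin a, (b j i)^2 ∧
    (∑ j : Fin s, (1 / (a:ℝ)) * ∑ i : Fin a,
        ((1 - p) * ((a:ℝ) * ((b j i - p) / (1 - 2*p)) - b j i)^2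
          + p * ((a:ℝ) * ((1 - b j i - p) / (1 - 2*p)) - b j i)^2
          + ∑ i' ∈ Finset.univ.erase i, (b j i')^2))
      ≤ (s:ℝ) * (a:ℝ)^2 * (p * (1 - p) / (1 - 2*p)^2) + ((a:ℝ) - 1) * (d:ℝ) := by
  have hq : (1 - 2*p) ≠ 0 := by nlinarith
  have ha' : (a:ℝ) ≠ 0 := Nat.cast_ne_zero.mpr ha.ne'
  set v : ℝ := p * (1 - p) / (1 - 2*p)^2 with hv
  -- key: the main sum equals s a² v + (a-1) * norm
  have key : ∀ j : Fin s, (1 / (a:ℝ)) * ∑ i : Fin a,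
        ((1 - p) * ((a:ℝ) * ((b j i - p) / (1 - 2*p)) - b j i)^2
          + p * ((a:ℝ) * ((1 - b j i - p) / (1 - 2*p)) - b j i)^2
          + ∑ i' ∈ Finset.univ.erase i, (b j i')^2)
      = (a:ℝ)^2 * v + ((a:ℝ) - 1) * ∑ i : Fin a, (b j i)^2 := by
    intro j
    have hpt : ∀ i : Fin a,
        ((1 - p) * ((a:ℝ) * ((b j i - p) / (1 - 2*p)) - b j i)^2
          + p * ((a:ℝ) * ((1 - b j i - p) / (1 - 2*p)) - b j i)^2
          + ∑ i' ∈ Finset.univ.erase i, (b j i')^2)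
        = ((a:ℝ)^2 * v + (((a:ℝ) - 1)^2 - 1) * (b j i)^2 + ∑ i' : Fin a, (b j i')^2) := by
      intro i
      have he : ∑ i' ∈ Finset.univ.erase i, (b j i')^2
          = (∑ i' : Fin a, (b j i')^2) - (b j i)^2 :=
        Finset.sum_erase_eq_sub (Finset.mem_univ i)
      rw [he, hv]
      have hq2 : (1 - p * 2 : ℝ) ≠ 0 := by rw [mul_comm]; exact hq
      rcases hb j i with h | h <;> rw [h] <;> field_simp <;> ring
    rw [Finset.sum_congr rfl fun i _ => hpt i]
    rw [Finset.sum_add_distrib, Finset.sum_add_distrib, Finset.sum_const,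
      Finset.sum_const, Finset.card_univ, Fintype.card_fin, ← Finset.mul_sum]
    field_simp
    ring
  have hsum : (∑ j : Fin s, (1 / (a:ℝ)) * ∑ i : Fin a,
        ((1 - p) * ((a:ℝ) * ((b j i - p) / (1 - 2*p)) - b j i)^2
          + p * ((a:ℝ) * ((1 - b j i - p) / (1 - 2*p)) - b j i)^2
          + ∑ i' ∈ Finset.univ.erase i, (b j i')^2))
      = (s:ℝ) * (a:ℝ)^2 * v + ((a:ℝ) - 1) * ∑ j : Fin s, ∑ i : Fin a, (b j i)^2 := by
    rw [Finset.sum_congr rfl fun j _ => key j, Finset.sum_add_distrib,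
      Finset.sum_const, Finset.card_univ, Fintype.card_fin, ← Finset.mul_sum,
      nsmul_eq_mul]
    ring
  refine ⟨hsum, ?_⟩
  rw [hsum]
  have hnorm : (∑ j : Fin s, ∑ i : Fin a, (b j i)^2) ≤ (d:ℝ) := by
    have : (∑ j : Fin s, ∑ i : Fin a, (b j i)^2) ≤ ∑ j : Fin s, ∑ i : Fin a, (1:ℝ) := by
      refine Finset.sum_le_sum fun j _ => Finset.sum_le_sum fun i _ => ?_
      rcases hb j i with h | h <;> rw [h] <;> norm_num
    simp only [Finset.sum_const, Finset.card_univ, Fintype.card_fin, nsmul_eq_mul,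
      mul_one] at this
    calc _ ≤ (s:ℝ) * (a:ℝ) := this
      _ = (d:ℝ) := by rw [hd]; push_cast; ring
  have h1 : (0:ℝ) ≤ (a:ℝ) - 1 := by
    have : (1:ℝ) ≤ (a:ℝ) := by exact_mod_cast ha
    linarith
  nlinarith [mul_le_mul_of_nonneg_left hnorm h1]
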